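/- arXiv:2307.00891 — 7 statements merged into one kernel-verified Lean document; each statement's English description precedes it below -/
import Mathlib

section
/- (König–Rado theorem) Let F_q be a finite field of size q, and let a(x) = a_0 + a_1 x + ··· + a_{q−2} x^{q−2} ∈ F_q[x] be a polynomial of degree less than q−1. Let A be the (q−1)×(q−1) circulant matrix whose first row is (a_0, a_1, …, a_{q−2}) and whose subsequent rows are successive right cyclic shifts. Then the rank of A equals (q−1) minus the number of nonzero elements γ ∈ F_q with a(γ) = 0. -/
open Polynomial Matrix

/-- König–Rado: For a finite field `F` of size `q` and a polynomial
`a(x) = a_0 + a_1 x + ⋯ + a_{q-2} x^{q-2}`, the `(q-1)×(q-1)` circulant matrix with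
entries `A_{i,j} = a_{(j-i) mod (q-1)}` has rank `(q-1) - #{γ ≠ 0 : a(γ) = 0}`. -/
theorem koenig_rado {F : Type*} [Field F] [Fintype F] (q : ℕ) (hq : Fintype.card F = q)
    (a : Fin (q - 1) → F) :
    (Matrix.of fun i j : Fin (q - 1) => a (j - i)).rank
      = (q - 1) -
        Nat.card {γ : F // γ ≠ 0 ∧
          (∑ i : Fin (q - 1), Polynomial.C (a i) * Polynomial.X ^ (i : ℕ)).eval γ = 0} := by
  classical
  have h2 : 2 ≤ q := hq ▸ Fintype.one_lt_card
  haveI : NeZero (q - 1) := ⟨by omega⟩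
  obtain ⟨g, hg⟩ := IsCyclic.exists_generator (α := Fˣ)
  have hcard : Fintype.card Fˣ = q - 1 := by rw [Fintype.card_units, hq]
  have hord : orderOf g = q - 1 := by
    rw [orderOf_eq_card_of_forall_mem_zpowers hg, Nat.card_eq_fintype_card, hcard]
  have hordF : orderOf ((g : F)) = q - 1 := by rw [orderOf_units, hord]
  set p : Polynomial F := ∑ i : Fin (q - 1), Polynomial.C (a i) * Polynomial.X ^ (i : ℕ) with hp
  set d : Fin (q - 1) → F := fun j => p.eval ((g : F) ^ (j : ℕ)) with hd
  set v : Fin (q - 1) → F := fun i => (g : F) ^ (i : ℕ) with hv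
  -- injectivity of j ↦ g^j on Fin (q-1)
  have hinjU : Function.Injective (fun j : Fin (q - 1) => (g ^ (j : ℕ) : Fˣ)) := by
    intro i j hij
    have := (pow_eq_pow_iff_modEq (x := g)).mp hij
    rw [hord] at this
    exact Fin.ext ((Nat.mod_eq_of_lt i.isLt) ▸ (Nat.mod_eq_of_lt j.isLt) ▸ this)
  have hinj : Function.Injective v := by
    intro i j hij
    refine hinjU (Units.ext ?_)
    push_cast
    exact hij
  have hdetV : IsUnit (Matrix.vandermonde v).det := by
    rw [isUnit_iff_ne_zero, Matrix.det_vandermonde_ne_zero_iff]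
    exact hinj
  -- key identity: A * V = V * diagonal d
  have hkey : (Matrix.of fun i j : Fin (q - 1) => a (j - i)) * Matrix.vandermonde v
      = Matrix.vandermonde v * Matrix.diagonal d := by
    ext i j
    rw [Matrix.mul_apply, Matrix.mul_diagonal]
    have hpow : ∀ s : ℕ, (g : F) ^ (s % (q - 1)) = (g : F) ^ s := by
      intro s
      conv_lhs => rw [← hordF]
      exact pow_mod_orderOf _ _
    rw [show (Finset.univ : Finset (Fin (q - 1)))
        = Finset.univ.map (Equiv.addRight i).toEmbedding by simp, Finset.sum_map]
    simp only [Equiv.coe_toEmbedding, Equiv.coe_addRight]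
    simp only [hd, hp, Polynomial.eval_finset_sum]
    rw [Finset.mul_sum]
    refine Finset.sum_congr rfl fun m _ => ?_
    simp only [Polynomial.eval_mul, Polynomial.eval_pow, Polynomial.eval_C,
      Polynomial.eval_X, Matrix.vandermonde_apply, Matrix.of_apply, hv]
    have hval : ((m + i : Fin (q - 1)) : ℕ) = ((m : ℕ) + (i : ℕ)) % (q - 1) := by
      simp [Fin.add_def]
    rw [add_sub_cancel_right, hval, ← pow_mul, ← pow_mul]
    calc (a m) * (g : F) ^ ((((m : ℕ) + (i : ℕ)) % (q - 1)) * (j : ℕ))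
        = a m * ((g : F) ^ (((m : ℕ) + (i : ℕ)) % (q - 1))) ^ (j : ℕ) := by rw [pow_mul]
      _ = a m * ((g : F) ^ ((m : ℕ) + (i : ℕ))) ^ (j : ℕ) := by rw [hpow]
      _ = (g : F) ^ ((i : ℕ) * (j : ℕ)) * (a m * ((g : F) ^ (j : ℕ)) ^ (m : ℕ)) := by
          rw [← pow_mul, ← pow_mul,
            show ((m : ℕ) + (i : ℕ)) * (j : ℕ) = (i : ℕ) * (j : ℕ) + (j : ℕ) * (m : ℕ) by ring,
            pow_add]
          ring
  -- rank computation
  have hrank : (Matrix.of fun i j : Fin (q - 1) => a (j - i)).rank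
      = Fintype.card {j : Fin (q - 1) // d j ≠ 0} := by
    have h1 := Matrix.rank_mul_eq_left_of_isUnit_det (Matrix.vandermonde v)
      (Matrix.of fun i j : Fin (q - 1) => a (j - i)) hdetV
    have h2 := Matrix.rank_mul_eq_right_of_isUnit_det (Matrix.vandermonde v)
      (Matrix.diagonal d) hdetV
    rw [← h1, hkey, h2, Matrix.rank_diagonal]
  -- bijection between roots
  have hbij : Function.Bijective (fun j : Fin (q - 1) => (g ^ (j : ℕ) : Fˣ)) := by
    refine (Fintype.bijective_iff_injective_and_card _).mpr
      ⟨hinjU, by rw [hcard, Fintype.card_fin]⟩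
  have hcount : Nat.card {γ : F // γ ≠ 0 ∧ p.eval γ = 0}
      = Fintype.card {j : Fin (q - 1) // d j = 0} := by
    rw [← Nat.card_eq_fintype_card]
    refine Nat.card_congr (Equiv.symm (Equiv.ofBijective
      (fun j => ⟨(g : F) ^ ((j : Fin (q - 1)) : ℕ), ?_, j.2⟩) ⟨?_, ?_⟩))
    · exact pow_ne_zero _ (Units.ne_zero g)
    · intro i j hij
      exact Subtype.ext (hinj (congrArg Subtype.val hij))
    · rintro ⟨γ, hγ0, hγ⟩
      obtain ⟨j, hj⟩ := hbij.2 (Units.mk0 γ hγ0)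
      have hjγ : (g : F) ^ (j : ℕ) = γ := by
        have := congrArg Units.val hj
        simpa using this
      exact ⟨⟨j, by rw [hd]; simp only [hjγ]; exact hγ⟩, Subtype.ext hjγ⟩
  have hcompl : Fintype.card {j : Fin (q - 1) // d j ≠ 0}
      = (q - 1) - Fintype.card {j : Fin (q - 1) // d j = 0} := by
    have := Fintype.card_subtype_compl (fun j : Fin (q - 1) => d j = 0)
    simpa using this
  rw [hrank, hcompl, hcount]
end

section
/- Let F_q be a finite field and let a(x) ∈ F_q[x] be a nonzero polynomial of degree less than q−1 having exactly q−1−τ distinct nonzero roots in F_q. Then the (q−1)×(q−1) circulant matrix associated with the coefficient vector of a(x) contains a τ×τ invertible submatrix, i.e., its rank is at least τ. -/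
open Polynomial Matrix

/-- If a nonzero polynomial `a(x)` of degree `< q-1` over a finite field of size
`q` has exactly `q-1-τ` distinct nonzero roots, then the associated `(q-1)×(q-1)` circulant
matrix has rank at least `τ` (hence contains a `τ×τ` invertible submatrix). -/
theorem circulant_rank_ge {F : Type*} [Field F] [Fintype F] (q τ : ℕ)
    (hq : Fintype.card F = q) (a : Fin (q - 1) → F)
    (ha : ∃ i, a i ≠ 0) (hτ : τ ≤ q - 1)
    (hroots : Nat.card {γ : F // γ ≠ 0 ∧
        (∑ i : Fin (q - 1), Polynomial.C (a i) * Polynomial.X ^ (i : ℕ)).eval γ = 0}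
      = q - 1 - τ) :
    τ ≤ (Matrix.of fun i j : Fin (q - 1) => a (j - i)).rank := by
  classical
  have hq2 : 1 < q := hq ▸ Fintype.one_lt_card
  have hn0 : 0 < q - 1 := Nat.sub_pos_of_lt hq2
  haveI : NeZero (q - 1) := ⟨hn0.ne'⟩
  set p : F[X] := ∑ i : Fin (q - 1), C (a i) * X ^ (i : ℕ) with hp
  set A : Matrix (Fin (q - 1)) (Fin (q - 1)) F := Matrix.of fun i j : Fin (q - 1) => a (j - i) with hA
  -- counting
  have hcard0 : (Finset.univ.filter (fun γ : F => γ ≠ 0)).card = q - 1 := by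
    rw [Finset.filter_ne' Finset.univ 0, Finset.card_erase_of_mem (Finset.mem_univ 0),
      Finset.card_univ, hq]
  have hsplit := Finset.card_filter_add_card_filter_not
    (s := Finset.univ.filter (fun γ : F => γ ≠ 0)) (p := fun γ => p.eval γ = 0)
  rw [Finset.filter_filter, Finset.filter_filter, hcard0] at hsplit
  have hroots' : (Finset.univ.filter (fun γ : F => γ ≠ 0 ∧ p.eval γ = 0)).card = q - 1 - τ := by
    rw [← hroots, Nat.card_eq_fintype_card, Fintype.card_subtype]
  have hgood : (Finset.univ.filter (fun γ : F => γ ≠ 0 ∧ ¬ p.eval γ = 0)).card = τ := by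
    rw [hroots'] at hsplit
    omega
  set G := Finset.univ.filter (fun γ : F => γ ≠ 0 ∧ ¬ p.eval γ = 0) with hG
  -- pick the good elements
  have e : Fin τ ≃ G := (G.equivFinOfCardEq hgood).symm
  set g : Fin τ → F := fun t => ((e t : G) : F) with hg
  have hginj : Function.Injective g :=
    Subtype.val_injective.comp e.injective
  have hgmem : ∀ t, g t ≠ 0 ∧ p.eval (g t) ≠ 0 := by
    intro t
    exact (Finset.mem_filter.mp (e t).2).2
  -- eigenvector property
  set v : Fin τ → (Fin (q - 1) → F) := fun t i => g t ^ (i : ℕ) with hv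
  have heig : ∀ t, A *ᵥ v t = p.eval (g t) • v t := by
    intro t
    have hz : g t ≠ 0 := (hgmem t).1
    have hord : g t ^ (q - 1) = 1 := by
      rw [← hq]; exact FiniteField.pow_card_sub_one_eq_one _ hz
    have hpow : ∀ m : ℕ, g t ^ (m % (q - 1)) = g t ^ m := by
      intro m
      conv_rhs => rw [← Nat.mod_add_div m (q - 1), pow_add, pow_mul, hord, one_pow, mul_one]
    funext i
    have hre : ∀ j : Fin (q - 1), a (j - i) * g t ^ (j : ℕ)
        = a (j - i) * g t ^ ((j - i : Fin (q - 1)) : ℕ) * g t ^ (i : ℕ) := by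
      intro j
      rw [mul_assoc, ← pow_add]
      congr 1
      have hsub : ((j - i : Fin (q - 1)) : ℕ) = ((q - 1) - (i : ℕ) + (j : ℕ)) % (q - 1) := by
        simp [Fin.sub_def]
      have key : g t ^ (((q - 1) - (i : ℕ) + (j : ℕ)) % (q - 1) + (i : ℕ)) = g t ^ (j : ℕ) := by
        rw [pow_add, hpow, ← pow_add,
          (by have := i.isLt; omega : (q - 1) - (i : ℕ) + (j : ℕ) + (i : ℕ) = (q - 1) + (j : ℕ)),
          pow_add, hord, one_mul]
      rw [hsub]
      exact key.symm
    have heval : p.eval (g t) = ∑ k : Fin (q - 1), a k * g t ^ (k : ℕ) := by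
      rw [hp, eval_finset_sum]
      simp
    calc (A *ᵥ v t) i = ∑ j : Fin (q - 1), a (j - i) * g t ^ (j : ℕ) := by
          simp [Matrix.mulVec, dotProduct, hA, hv]
      _ = ∑ j : Fin (q - 1), a (j - i) * g t ^ ((j - i : Fin (q - 1)) : ℕ) * g t ^ (i : ℕ) := by
          exact Finset.sum_congr rfl fun j _ => hre j
      _ = (∑ k : Fin (q - 1), a k * g t ^ (k : ℕ)) * g t ^ (i : ℕ) := by
          rw [← Finset.sum_mul]
          congr 1
          exact Fintype.sum_equiv (Equiv.subRight i) _ _ (fun j => by simp)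
      _ = (p.eval (g t) • v t) i := by
          rw [heval]; simp [hv, Pi.smul_apply, smul_eq_mul]
  -- membership in range
  have hmem : ∀ t, v t ∈ LinearMap.range A.mulVecLin := by
    intro t
    refine ⟨(p.eval (g t))⁻¹ • v t, ?_⟩
    rw [LinearMap.map_smul, Matrix.mulVecLin_apply, heig t, smul_smul,
      inv_mul_cancel₀ (hgmem t).2, one_smul]
  -- linear independence
  have hli : LinearIndependent F v := by
    rw [Fintype.linearIndependent_iff]
    intro c hc
    have key : ∀ i : Fin τ, (∑ j : Fin τ, c j * g j ^ (i : ℕ)) = 0 := by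
      intro i
      have := congr_fun hc (Fin.castLE hτ i)
      simpa [hv, Finset.sum_apply, Pi.smul_apply, smul_eq_mul] using this
    have := eq_zero_of_forall_pow_sum_mul_pow_eq_zero hginj key
    exact fun i => congr_fun this i
  -- conclude
  set u : Fin τ → ↥(LinearMap.range A.mulVecLin) := fun t => ⟨v t, hmem t⟩ with hu
  have hliu : LinearIndependent F u := by
    apply LinearIndependent.of_comp (LinearMap.range A.mulVecLin).subtype
    exact hli
  have := hliu.fintype_card_le_finrank
  simpa [Matrix.rank] using this
end

section
/- Let f, g ∈ F[x] be polynomials over a field F with deg f = d ≥ deg g = m ≥ 1, and let 0 ≤ l ≤ m. There exists a polynomial of degree exactly l in the Euclidean remainder sequence of f and g if and only if the l-th subresultant sres_l(f, g) is nonzero. -/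
open Polynomial

variable {F : Type*} [Field F]

/-- Coefficient of a polynomial at an integer index (zero for negative indices). -/
noncomputable def coeffZ (p : Polynomial F) (k : ℤ) : F :=
  if 0 ≤ k then p.coeff k.toNat else 0

/-- The `l`-th subresultant matrix `S_l(f,g)` of size `(m + d - 2l) × (m + d - 2l)`:
the first `m - l` columns are filled with (shifted) coefficients of `f` (of degree `d`),
the last `d - l` columns with (shifted) coefficients of `g` (of degree `m`). -/
noncomputable def sresMat (f g : Polynomial F) (d m l : ℕ) :
    Matrix (Fin (m + d - 2 * l)) (Fin (m + d - 2 * l)) F :=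
  Matrix.of fun i j =>
    if (j : ℕ) < m - l then coeffZ f ((d : ℤ) - (i : ℕ) + (j : ℕ))
    else coeffZ g ((m : ℤ) - (i : ℕ) + (((j : ℕ) - (m - l) : ℕ) : ℤ))

/-- Pairs of consecutive elements of the Euclidean remainder sequence of `f` and `g`:
`ρ_{-1} = f`, `ρ_0 = g`, and `ρ_i = ρ_{i-2} mod ρ_{i-1}` as long as `ρ_{i-1} ≠ 0`. -/
inductive RemSeqPair (f g : Polynomial F) : Polynomial F → Polynomial F → Prop
  | base : RemSeqPair f g f g
  | step {a b : Polynomial F} : RemSeqPair f g a b → b ≠ 0 → RemSeqPair f g b (a % b)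

/-- Membership in the Euclidean remainder sequence of `f` and `g`. -/
def InRemSeq (f g ρ : Polynomial F) : Prop :=
  ρ = f ∨ ∃ a, RemSeqPair f g a ρ

lemma coeffZ_sub (p : Polynomial F) (s D : ℕ) :
    coeffZ p ((D : ℤ) - s) = (X ^ s * p).coeff D := by
  rw [X_pow_mul, coeff_mul_X_pow']
  unfold coeffZ
  by_cases h : s ≤ D
  · rw [if_pos (by omega), if_pos h]
    congr 1
    omega
  · rw [if_neg (by omega), if_neg h]

noncomputable def polyOf (n : ℕ) (a : ℕ → F) : Polynomial F :=
  ∑ j ∈ Finset.range n, C (a j) * X ^ (n - 1 - j)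

lemma polyOf_coeff (n : ℕ) (a : ℕ → F) (e : ℕ) :
    (polyOf n a).coeff e = if e < n then a (n - 1 - e) else 0 := by
  unfold polyOf
  rw [finset_sum_coeff]
  simp only [coeff_C_mul, coeff_X_pow, mul_ite, mul_one, mul_zero]
  by_cases h : e < n
  · rw [if_pos h]
    rw [Finset.sum_eq_single_of_mem (n - 1 - e) (Finset.mem_range.2 (by omega))]
    · rw [if_pos (by omega)]
    · intro j hj hne
      rw [if_neg (by simp at hj; omega)]
  · rw [if_neg h]
    apply Finset.sum_eq_zero
    intro j hj
    rw [if_neg (by simp at hj; omega)]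

lemma polyOf_degree_lt (n : ℕ) (a : ℕ → F) :
    (polyOf n a).degree < (n : WithBot ℕ) := by
  rw [show ((n : WithBot ℕ)) = ((n : ℕ) : WithBot ℕ) from rfl, degree_lt_iff_coeff_zero]
  intro e he
  rw [polyOf_coeff, if_neg (by exact_mod_cast not_lt.2 (by exact_mod_cast he))]

lemma core_sum (f g : Polynomial F) (d m l : ℕ) (hlm : l ≤ m) (hmd : m ≤ d)
    (c : ℕ → F) (i : ℕ) (hi : i < m + d - 2 * l) :
    ∑ j ∈ Finset.range (m + d - 2 * l),
      (if j < m - l then coeffZ f ((d : ℤ) - i + j)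
        else coeffZ g ((m : ℤ) - i + ((j - (m - l) : ℕ) : ℤ))) * c j
    = (polyOf (m - l) c * f
        + polyOf (d - l) (fun j => c (m - l + j)) * g).coeff (d + m - l - 1 - i) := by
  have hsplit : m - l ≤ m + d - 2 * l := by omega
  rw [← Finset.sum_range_add_sum_Ico _ hsplit, Finset.sum_Ico_eq_sum_range]
  have h2 : m + d - 2 * l - (m - l) = d - l := by omega
  rw [h2, coeff_add]
  congr 1
  · unfold polyOf
    rw [Finset.sum_mul, finset_sum_coeff]
    apply Finset.sum_congr rfl
    intro j hj
    rw [Finset.mem_range] at hj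
    rw [if_pos hj, mul_assoc, coeff_C_mul]
    have : (d : ℤ) - i + j = ((d + m - l - 1 - i : ℕ) : ℤ) - ((m - l - 1 - j : ℕ) : ℤ) := by
      omega
    rw [this, coeffZ_sub, mul_comm]
  · unfold polyOf
    rw [Finset.sum_mul, finset_sum_coeff]
    apply Finset.sum_congr rfl
    intro j hj
    rw [Finset.mem_range] at hj
    rw [if_neg (by omega), mul_assoc, coeff_C_mul]
    have h3 : m - l + j - (m - l) = j := by omega
    have : (m : ℤ) - i + ((m - l + j - (m - l) : ℕ) : ℤ)
        = ((d + m - l - 1 - i : ℕ) : ℤ) - ((d - l - 1 - j : ℕ) : ℤ) := by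
      rw [h3]; omega
    rw [this, coeffZ_sub, mul_comm]

lemma mulVec_eq (f g : Polynomial F) (d m l : ℕ) (hlm : l ≤ m) (hmd : m ≤ d)
    (c : Fin (m + d - 2 * l) → F) (cx : ℕ → F)
    (hcx : ∀ j (h : j < m + d - 2 * l), cx j = c ⟨j, h⟩)
    (i : Fin (m + d - 2 * l)) :
    (sresMat f g d m l).mulVec c i
      = (polyOf (m - l) cx * f
          + polyOf (d - l) (fun j => cx (m - l + j)) * g).coeff (d + m - l - 1 - i) := by
  rw [← core_sum f g d m l hlm hmd cx i i.isLt]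
  rw [Matrix.mulVec, dotProduct, ← Fin.sum_univ_eq_sum_range]
  apply Finset.sum_congr rfl
  intro j _
  rw [hcx j j.isLt]
  rfl

lemma det_eq_zero_iff_ker (f g : Polynomial F) (d m l : ℕ)
    (hf : f.degree ≤ (d : WithBot ℕ)) (hgd : g.degree ≤ (m : WithBot ℕ))
    (hlm : l ≤ m) (hmd : m ≤ d) (hm1 : 1 ≤ m) :
    (sresMat f g d m l).det = 0 ↔
      ∃ u v : Polynomial F, ¬(u = 0 ∧ v = 0) ∧ u.degree < ((m - l : ℕ) : WithBot ℕ) ∧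
        v.degree < ((d - l : ℕ) : WithBot ℕ) ∧ (u * f + v * g).degree < (l : WithBot ℕ) := by
  classical
  constructor
  · intro hdet
    obtain ⟨c, hc0, hmv⟩ := Matrix.exists_mulVec_eq_zero_iff.2 hdet
    set cx : ℕ → F := fun j => if h : j < m + d - 2 * l then c ⟨j, h⟩ else 0 with hcxdef
    have hcx : ∀ j (h : j < m + d - 2 * l), cx j = c ⟨j, h⟩ := fun j h => dif_pos h
    set u := polyOf (m - l) cx with hu
    set v := polyOf (d - l) (fun j => cx (m - l + j)) with hv
    have hud : u.degree < ((m - l : ℕ) : WithBot ℕ) := polyOf_degree_lt _ _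
    have hvd : v.degree < ((d - l : ℕ) : WithBot ℕ) := polyOf_degree_lt _ _
    refine ⟨u, v, ?_, hud, hvd, ?_⟩
    · -- nonzero
      intro ⟨hu0, hv0⟩
      apply hc0
      funext k
      by_cases hk : (k : ℕ) < m - l
      · have := polyOf_coeff (m - l) cx (m - l - 1 - k)
        rw [← hu, hu0, coeff_zero, if_pos (by omega)] at this
        have he : m - l - 1 - (m - l - 1 - (k : ℕ)) = (k : ℕ) := by omega
        rw [he, hcx _ k.isLt] at this
        simpa [Fin.eta] using this.symm
      · have hk2 : (k : ℕ) - (m - l) < d - l := by have := k.isLt; omega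
        have := polyOf_coeff (d - l) (fun j => cx (m - l + j)) (d - l - 1 - ((k : ℕ) - (m - l)))
        rw [← hv, hv0, coeff_zero, if_pos (by omega)] at this
        have he : m - l + (d - l - 1 - (d - l - 1 - ((k : ℕ) - (m - l)))) = (k : ℕ) := by
          have := k.isLt; omega
        simp only [he] at this
        rw [hcx _ k.isLt] at this
        simpa [Fin.eta] using this.symm
    · -- degree < l
      rw [degree_lt_iff_coeff_zero]
      intro e he
      by_cases he2 : e ≤ d + m - l - 1
      · have hi : d + m - l - 1 - e < m + d - 2 * l := by omega
        have := congrFun hmv (⟨d + m - l - 1 - e, hi⟩ : Fin (m + d - 2 * l))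
        rw [mulVec_eq f g d m l hlm hmd c cx hcx] at this
        have hee : d + m - l - 1 - (d + m - l - 1 - e) = e := by omega
        rw [hee] at this
        exact this
      · rw [coeff_add]
        have h1 : (u * f).coeff e = 0 := by
          apply coeff_eq_zero_of_degree_lt
          apply lt_of_le_of_lt (degree_mul_le u f)
          calc u.degree + f.degree ≤ u.degree + (d : WithBot ℕ) := by gcongr
            _ < ((m - l : ℕ) : WithBot ℕ) + (d : WithBot ℕ) :=
                WithBot.add_lt_add_right (by simp) hud
            _ ≤ (e : WithBot ℕ) := by
                rw [← Nat.cast_add, Nat.cast_le]; omega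
        have h2 : (v * g).coeff e = 0 := by
          apply coeff_eq_zero_of_degree_lt
          apply lt_of_le_of_lt (degree_mul_le v g)
          calc v.degree + g.degree ≤ v.degree + (m : WithBot ℕ) := by gcongr
            _ < ((d - l : ℕ) : WithBot ℕ) + (m : WithBot ℕ) :=
                WithBot.add_lt_add_right (by simp) hvd
            _ ≤ (e : WithBot ℕ) := by
                rw [← Nat.cast_add, Nat.cast_le]; omega
        rw [h1, h2, add_zero]
  · rintro ⟨u, v, huv0, hud, hvd, hw⟩
    set cx : ℕ → F := fun j =>
      if j < m - l then u.coeff (m - l - 1 - j) else v.coeff (d - l - 1 - (j - (m - l)))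
      with hcxdef
    set c : Fin (m + d - 2 * l) → F := fun k => cx (k : ℕ) with hc
    have hcx : ∀ j (h : j < m + d - 2 * l), cx j = c ⟨j, h⟩ := fun j h => rfl
    have hu' : polyOf (m - l) cx = u := by
      ext e
      rw [polyOf_coeff]
      by_cases he : e < m - l
      · rw [if_pos he]
        simp only [hcxdef]
        rw [if_pos (by omega)]
        congr 1
        omega
      · rw [if_neg he, eq_comm]
        apply coeff_eq_zero_of_degree_lt
        exact hud.trans_le (by rw [Nat.cast_le]; omega)
    have hv' : polyOf (d - l) (fun j => cx (m - l + j)) = v := by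
      ext e
      rw [polyOf_coeff]
      by_cases he : e < d - l
      · rw [if_pos he]
        simp only [hcxdef]
        rw [if_neg (by omega)]
        congr 1
        omega
      · rw [if_neg he, eq_comm]
        apply coeff_eq_zero_of_degree_lt
        exact hvd.trans_le (by rw [Nat.cast_le]; omega)
    rw [← Matrix.exists_mulVec_eq_zero_iff]
    refine ⟨c, ?_, ?_⟩
    · -- c ≠ 0
      intro hc0
      apply huv0
      constructor
      · by_contra hu0
        have hnd : u.natDegree < m - l := by
          rwa [← natDegree_lt_iff_degree_lt hu0] at hud
        have : c ⟨m - l - 1 - u.natDegree, by omega⟩ = 0 := by rw [hc0]; rfl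
        rw [hc] at this
        simp only [hcxdef] at this
        rw [if_pos (by omega)] at this
        have he : m - l - 1 - (m - l - 1 - u.natDegree) = u.natDegree := by omega
        rw [he] at this
        exact hu0 (leadingCoeff_eq_zero.1 this)
      · by_contra hv0
        have hnd : v.natDegree < d - l := by
          rwa [← natDegree_lt_iff_degree_lt hv0] at hvd
        have : c ⟨m - l + (d - l - 1 - v.natDegree), by omega⟩ = 0 := by rw [hc0]; rfl
        rw [hc] at this
        simp only [hcxdef] at this
        rw [if_neg (by omega)] at this
        have he : d - l - 1 - (m - l + (d - l - 1 - v.natDegree) - (m - l)) = v.natDegree := by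
          omega
        rw [he] at this
        exact hv0 (leadingCoeff_eq_zero.1 this)
    · funext i
      rw [mulVec_eq f g d m l hlm hmd c cx hcx, hu', hv']
      apply coeff_eq_zero_of_degree_lt
      apply hw.trans_le
      rw [Nat.cast_le]
      have := i.isLt
      omega

lemma degree_div_eq' {b r : Polynomial F} (hr : r ≠ 0) (hle : r.degree ≤ b.degree) :
    (b / r).degree = ((b.natDegree - r.natDegree : ℕ) : WithBot ℕ) := by
  have hb : b ≠ 0 := by
    intro h0
    rw [h0, degree_zero, le_bot_iff, degree_eq_bot] at hle
    exact hr hle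
  have hq0 : b / r ≠ 0 := by
    rw [Ne, Polynomial.div_eq_zero_iff hr]
    exact not_lt.2 hle
  have h := degree_add_div hr hle
  rw [degree_eq_natDegree hr, degree_eq_natDegree hb, degree_eq_natDegree hq0,
    ← Nat.cast_add, Nat.cast_inj] at h
  rw [degree_eq_natDegree hq0, Nat.cast_inj]
  omega

/-- Invariant carried along the remainder sequence. -/
def InvT (f g : Polynomial F) (d m : ℕ) (b r : Polynomial F) : Prop :=
  ∃ (s t s' t' : Polynomial F) (c : F) (p : ℕ),
    b = s * f + t * g ∧ r = s' * f + t' * g ∧ s * t' - t * s' = C c ∧ c ≠ 0 ∧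
    r.degree < b.degree ∧ b.natDegree < p ∧ b.natDegree ≤ m ∧
    (s = 0 ∨ (p ≤ m ∧ s.degree = ((m - p : ℕ) : WithBot ℕ))) ∧
    t.degree ≤ ((d - p : ℕ) : WithBot ℕ) ∧
    s'.degree = ((m - b.natDegree : ℕ) : WithBot ℕ) ∧
    t'.degree ≤ ((d - b.natDegree : ℕ) : WithBot ℕ)

lemma InvT.next {f g : Polynomial F} {d m : ℕ} {b r : Polynomial F}
    (hmd : m ≤ d) (h : InvT f g d m b r) (hr : r ≠ 0) : InvT f g d m r (b % r) := by
  obtain ⟨s, t, s', t', c, p, hbeq, hreq, hdet, hc, hdeg, hbp, hbm, hs, ht, hs', ht'⟩ := h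
  have hb0 : b ≠ 0 := by
    intro h0
    rw [h0, degree_zero] at hdeg
    exact not_lt_bot hdeg
  have hnd : r.natDegree < b.natDegree := natDegree_lt_natDegree hr hdeg
  have hq : (b / r).degree = ((b.natDegree - r.natDegree : ℕ) : WithBot ℕ) :=
    degree_div_eq' hr hdeg.le
  have hmod : b % r = b - r * (b / r) :=
    eq_sub_of_add_eq (by rw [add_comm]; exact EuclideanDomain.div_add_mod b r)
  refine ⟨s', t', s - (b / r) * s', t - (b / r) * t', -c, b.natDegree,
    hreq, ?_, ?_, neg_ne_zero.2 hc, EuclideanDomain.mod_lt b hr, hnd, by omega, ?_, ?_, ?_, ?_⟩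
  · rw [hmod, hbeq, hreq]; ring
  · have e1 : s' * (t - (b / r) * t') - t' * (s - (b / r) * s') = -(s * t' - t * s') := by ring
    rw [e1, hdet, ← C_neg]
  · exact Or.inr ⟨by omega, hs'⟩
  · exact ht'
  · -- exact degree of new s'
    have hqs : ((b / r) * s').degree = ((m - r.natDegree : ℕ) : WithBot ℕ) := by
      rw [degree_mul, hq, hs', ← Nat.cast_add]
      congr 1
      omega
    have hlt : s.degree < ((b / r) * s').degree := by
      rw [hqs]
      rcases hs with hs0 | ⟨hpm, hsd⟩
      · rw [hs0, degree_zero]; exact WithBot.bot_lt_coe _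
      · rw [hsd, Nat.cast_lt]; omega
    rw [degree_sub_eq_right_of_degree_lt hlt, hqs]
  · -- bound on new t'
    apply le_trans (degree_sub_le _ _)
    apply max_le
    · exact le_trans ht (by rw [Nat.cast_le]; omega)
    · apply le_trans (degree_mul_le _ _)
      rw [hq]
      calc ((b.natDegree - r.natDegree : ℕ) : WithBot ℕ) + t'.degree
          ≤ ((b.natDegree - r.natDegree : ℕ) : WithBot ℕ) + ((d - b.natDegree : ℕ) : WithBot ℕ) := by
            gcongr
        _ = ((d - r.natDegree : ℕ) : WithBot ℕ) := by
            rw [← Nat.cast_add]; congr 1; omega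

lemma invT_base {f g : Polynomial F} {d m : ℕ}
    (hf : f ≠ 0) (hg : g ≠ 0) (hd : f.natDegree = d) (hm : g.natDegree = m) (hmd : m ≤ d) :
    InvT f g d m g (f % g) := by
  have hgf : g.degree ≤ f.degree := by
    rw [degree_eq_natDegree hf, degree_eq_natDegree hg, hd, hm, Nat.cast_le]
    exact hmd
  have hq : (f / g).degree = ((f.natDegree - g.natDegree : ℕ) : WithBot ℕ) :=
    degree_div_eq' hg hgf
  refine ⟨0, 1, 1, -(f / g), -1, m + 1, by simp, ?_, by simp [← C_neg],
    neg_ne_zero.2 one_ne_zero, ?_, by omega, by omega, Or.inl rfl, ?_, ?_, ?_⟩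
  · have hmod : f % g = f - g * (f / g) :=
      eq_sub_of_add_eq (by rw [add_comm]; exact EuclideanDomain.div_add_mod f g)
    rw [hmod]; ring
  · exact EuclideanDomain.mod_lt f hg
  · rw [degree_one]
    exact_mod_cast Nat.zero_le _
  · rw [degree_one, hm, Nat.sub_self, Nat.cast_zero]
  · rw [degree_neg, hq, hd, hm, Nat.cast_le]

lemma remSeqPair_invT {f g : Polynomial F} {d m : ℕ}
    (hf : f ≠ 0) (hg : g ≠ 0) (hd : f.natDegree = d) (hm : g.natDegree = m) (hmd : m ≤ d) :
    ∀ a b : Polynomial F, RemSeqPair f g a b → b ≠ 0 → InvT f g d m b (a % b) := by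
  intro a b h
  induction h with
  | base => intro _; exact invT_base hf hg hd hm hmd
  | step hab hb ih => intro hr; exact (ih hb).next hmd hr

lemma findJump {f g : Polynomial F} {l : ℕ}
    (hno : ∀ ρ : Polynomial F, InRemSeq f g ρ → ρ.degree ≠ (l : WithBot ℕ)) :
    ∀ n (a b : Polynomial F), RemSeqPair f g a b → b ≠ 0 → b.natDegree ≤ n →
      (l : WithBot ℕ) < b.degree →
      ∃ a' b', RemSeqPair f g a' b' ∧ b' ≠ 0 ∧ (l : WithBot ℕ) < b'.degree ∧
        (a' % b').degree < (l : WithBot ℕ) := by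
  intro n
  induction n using Nat.strong_induction_on with
  | _ n ih =>
    intro a b hab hb hn hl
    rcases lt_trichotomy ((a % b).degree) ((l : WithBot ℕ)) with h | h | h
    · exact ⟨a, b, hab, hb, hl, h⟩
    · exact absurd h (hno _ (Or.inr ⟨b, RemSeqPair.step hab hb⟩))
    · have hr0 : a % b ≠ 0 := by
        intro h0
        rw [h0, degree_zero] at h
        exact not_lt_bot h
      have hdlt : (a % b).degree < b.degree := EuclideanDomain.mod_lt a hb
      have hrd : (a % b).natDegree < b.natDegree := natDegree_lt_natDegree hr0 hdlt
      exact ih (a % b).natDegree (by omega) b (a % b) (RemSeqPair.step hab hb) hr0 le_rfl h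

lemma no_kernel {f g : Polynomial F} {d m l : ℕ} {ρ r u v : Polynomial F}
    (hinv : InvT f g d m ρ r) (hl : ρ.degree = (l : WithBot ℕ))
    (hud : u.degree < ((m - l : ℕ) : WithBot ℕ))
    (hw : (u * f + v * g).degree < (l : WithBot ℕ))
    (huv : ¬(u = 0 ∧ v = 0)) : False := by
  obtain ⟨s, t, s', t', c, p, hρeq, hreq, hdet, hc, hdegr, hpp, hρm, hs, ht, hs', ht'⟩ := hinv
  have hρ0 : ρ ≠ 0 := fun h0 => by simp [h0] at hl
  have hndρ : ρ.natDegree = l := natDegree_eq_of_degree_eq_some hl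
  rw [hndρ] at hpp hs' ht'
  set A := C c⁻¹ * (u * t' - v * s') with hA_def
  set B := C c⁻¹ * (v * s - u * t) with hB_def
  have hCC : C c⁻¹ * C c = 1 := by rw [← C_mul, inv_mul_cancel₀ hc, C_1]
  have hABw : A * ρ + B * r = u * f + v * g := by
    have e1 : A * ρ + B * r = C c⁻¹ * ((s * t' - t * s') * (u * f + v * g)) := by
      rw [hρeq, hreq, hA_def, hB_def]; ring
    rw [hdet, ← mul_assoc, hCC, one_mul] at e1
    exact e1
  have hABu : A * s + B * s' = u := by
    have e1 : A * s + B * s' = C c⁻¹ * ((s * t' - t * s') * u) := by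
      rw [hA_def, hB_def]; ring
    rw [hdet, ← mul_assoc, hCC, one_mul] at e1
    exact e1
  have hABv : A * t + B * t' = v := by
    have e1 : A * t + B * t' = C c⁻¹ * ((s * t' - t * s') * v) := by
      rw [hA_def, hB_def]; ring
    rw [hdet, ← mul_assoc, hCC, one_mul] at e1
    exact e1
  have hs'0 : s' ≠ 0 := fun h0 => by simp [h0] at hs'
  by_cases hB : B = 0
  · by_cases hA : A = 0
    · exact huv ⟨by rw [← hABu, hA, hB, zero_mul, zero_mul, add_zero],
        by rw [← hABv, hA, hB, zero_mul, zero_mul, add_zero]⟩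
    · have h1 : (u * f + v * g).degree = A.degree + (l : WithBot ℕ) := by
        rw [← hABw, hB, zero_mul, add_zero, degree_mul, hl]
      have h2 : (l : WithBot ℕ) ≤ (u * f + v * g).degree := by
        rw [h1]
        calc (l : WithBot ℕ) = 0 + (l : WithBot ℕ) := (zero_add _).symm
          _ ≤ A.degree + (l : WithBot ℕ) := by
            gcongr
            exact zero_le_degree_iff.2 hA
      exact absurd hw (not_lt.2 h2)
  · -- B ≠ 0
    have hBs'ne : B * s' ≠ 0 := mul_ne_zero hB hs'0
    have hAs_lt : (A * s).degree < (B * s').degree := by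
      have hBs'bot : (B * s').degree ≠ ⊥ := fun h0 => hBs'ne (degree_eq_bot.1 h0)
      by_cases hA : A = 0
      · rw [hA, zero_mul, degree_zero]
        exact Ne.bot_lt hBs'bot
      · -- first, deg A < deg B
        have h1 : (A * ρ).degree = A.degree + (l : WithBot ℕ) := by rw [degree_mul, hl]
        have hAρl : (l : WithBot ℕ) ≤ (A * ρ).degree := by
          rw [h1]
          calc (l : WithBot ℕ) = 0 + (l : WithBot ℕ) := (zero_add _).symm
            _ ≤ A.degree + (l : WithBot ℕ) := by
              gcongr
              exact zero_le_degree_iff.2 hA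
        have hBr : (B * r).degree = (A * ρ).degree := by
          by_contra hne
          rcases lt_or_gt_of_ne hne with hlt | hgt
          · have : (u * f + v * g).degree = (A * ρ).degree := by
              rw [← hABw, degree_add_eq_left_of_degree_lt hlt]
            exact absurd hw (not_lt.2 (this ▸ hAρl))
          · have : (u * f + v * g).degree = (B * r).degree := by
              rw [← hABw, degree_add_eq_right_of_degree_lt hgt]
            exact absurd hw (not_lt.2 (this ▸ (hAρl.trans hgt.le)))
        have hr0 : r ≠ 0 := by
          intro h0
          rw [h0, mul_zero, degree_zero, h1] at hBr
          exact absurd hBr.symm (by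
            intro hcontra
            have : A.degree ≠ ⊥ := fun hb => hA (degree_eq_bot.1 hb)
            cases hq : A.degree with
            | bot => exact this hq
            | coe k => rw [hq] at hcontra; exact (by simp : ((k : WithBot ℕ) + (l : WithBot ℕ) ≠ ⊥)) (by exact_mod_cast hcontra))
        have hnds : B.natDegree + r.natDegree = A.natDegree + l := by
          have e1 : (A * ρ).degree = ((A.natDegree + l : ℕ) : WithBot ℕ) := by
            rw [degree_eq_natDegree (mul_ne_zero hA hρ0), natDegree_mul hA hρ0, hndρ]
          have e2 : (B * r).degree = ((B.natDegree + r.natDegree : ℕ) : WithBot ℕ) := by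
            rw [degree_eq_natDegree (mul_ne_zero hB hr0), natDegree_mul hB hr0]
          rw [e1, e2, Nat.cast_inj] at hBr
          exact hBr
        have hrl : r.natDegree < l := by
          have := natDegree_lt_natDegree hr0 hdegr
          omega
        have hAB : A.natDegree < B.natDegree := by omega
        rcases hs with hs0 | ⟨hpm, hsd⟩
        · rw [hs0, mul_zero, degree_zero]
          exact Ne.bot_lt hBs'bot
        · have hsne : s ≠ 0 := fun h0 => by simp [h0] at hsd
          have hnds1 : s.natDegree = m - p := natDegree_eq_of_degree_eq_some hsd
          have hnds2 : s'.natDegree = m - l := natDegree_eq_of_degree_eq_some hs'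
          rw [degree_eq_natDegree (mul_ne_zero hA hsne),
            degree_eq_natDegree (mul_ne_zero hB hs'0),
            natDegree_mul hA hsne, natDegree_mul hB hs'0, hnds1, hnds2, Nat.cast_lt]
          omega
    have hu_deg : u.degree = (B * s').degree := by
      rw [← hABu, degree_add_eq_right_of_degree_lt hAs_lt]
    have : ((m - l : ℕ) : WithBot ℕ) ≤ u.degree := by
      rw [hu_deg, degree_mul, hs']
      calc ((m - l : ℕ) : WithBot ℕ) = 0 + ((m - l : ℕ) : WithBot ℕ) := (zero_add _).symm
        _ ≤ B.degree + ((m - l : ℕ) : WithBot ℕ) := by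
          gcongr
          exact zero_le_degree_iff.2 hB
    exact absurd hud (not_lt.2 this)

/-- For polynomials `f, g` with `deg f = d ≥ deg g = m ≥ 1` and `0 ≤ l ≤ m`,
a polynomial of degree exactly `l` appears in the Euclidean remainder sequence of `f` and
`g` if and only if the `l`-th subresultant `sres_l(f,g) = det S_l(f,g)` is nonzero. -/
theorem degree_mem_remainder_seq_iff_sres_ne_zero
    (f g : Polynomial F) (d m l : ℕ)
    (hf : f ≠ 0) (hg : g ≠ 0) (hd : f.natDegree = d) (hm : g.natDegree = m)
    (hdm : m ≤ d) (hm1 : 1 ≤ m) (hl : l ≤ m) :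
    (∃ ρ : Polynomial F, InRemSeq f g ρ ∧ ρ.degree = l) ↔ (sresMat f g d m l).det ≠ 0 := by
  have hfd : f.degree ≤ (d : WithBot ℕ) := by
    rw [degree_eq_natDegree hf, hd]
  have hgd : g.degree ≤ (m : WithBot ℕ) := by
    rw [degree_eq_natDegree hg, hm]
  constructor
  · rintro ⟨ρ, hρin, hρdeg⟩
    intro hdet0
    rw [det_eq_zero_iff_ker f g d m l hfd hgd hl hdm hm1] at hdet0
    obtain ⟨u, v, huv, hud, hvd, hw⟩ := hdet0
    by_cases hlm : l = m
    · -- direct argument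
      have hu0 : u = 0 := by
        by_contra h
        have h2 := zero_le_degree_iff.2 h
        rw [hlm, Nat.sub_self, Nat.cast_zero] at hud
        exact absurd (h2.trans_lt hud) (by simp)
      have hv0 : v = 0 := by
        by_contra h
        rw [hu0, zero_mul, zero_add] at hw
        have h2 : (v * g).degree = v.degree + (m : WithBot ℕ) := by
          rw [degree_mul, degree_eq_natDegree hg, hm]
        have h3 : (l : WithBot ℕ) ≤ (v * g).degree := by
          rw [h2, hlm]
          calc (m : WithBot ℕ) = 0 + (m : WithBot ℕ) := (zero_add _).symm
            _ ≤ v.degree + (m : WithBot ℕ) := by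
              gcongr
              exact zero_le_degree_iff.2 h
        exact absurd hw (not_lt.2 h3)
      exact huv ⟨hu0, hv0⟩
    · have hlm' : l < m := lt_of_le_of_ne hl hlm
      rcases hρin with hρf | ⟨a, hpair⟩
      · rw [hρf, degree_eq_natDegree hf, hd, Nat.cast_inj] at hρdeg
        omega
      · have hρ0 : ρ ≠ 0 := fun h0 => by simp [h0] at hρdeg
        exact no_kernel (remSeqPair_invT hf hg hd hm hdm a ρ hpair hρ0) hρdeg hud hw huv
  · intro hdet
    by_cases hlm : l = m
    · exact ⟨g, Or.inr ⟨f, RemSeqPair.base⟩, by rw [degree_eq_natDegree hg, hm, hlm]⟩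
    · have hlm' : l < m := lt_of_le_of_ne hl hlm
      by_contra hno
      push_neg at hno
      have hgdeg : (l : WithBot ℕ) < g.degree := by
        rw [degree_eq_natDegree hg, hm, Nat.cast_lt]
        exact hlm'
      obtain ⟨a', b', hpair, hb'0, hb'deg, hmoddeg⟩ :=
        findJump (fun ρ hρ => hno ρ hρ) g.natDegree f g RemSeqPair.base hg le_rfl hgdeg
      obtain ⟨s, t, s', t', c, p, hbeq, hreq, hdet', hc, hdegr, hpp, hbm, hs, ht, hs', ht'⟩ :=
        remSeqPair_invT hf hg hd hm hdm a' b' hpair hb'0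
      have hndb : l < b'.natDegree := by
        rw [degree_eq_natDegree hb'0, Nat.cast_lt] at hb'deg
        exact hb'deg
      apply hdet
      rw [det_eq_zero_iff_ker f g d m l hfd hgd hl hdm hm1]
      refine ⟨s', t', ?_, ?_, ?_, ?_⟩
      · rintro ⟨h1, _⟩
        rw [h1] at hs'
        simp at hs'
      · rw [hs', Nat.cast_lt]
        omega
      · apply ht'.trans_lt
        rw [Nat.cast_lt]
        omega
      · rw [← hreq]
        exact hmoddeg
end

section
/- Let F be a field and f, g ∈ F[x] with deg f = d ≥ deg g = m ≥ 1. If v = deg(gcd(f, g)), then the v-th subresultant sres_v(f, g) is nonzero. -/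
open Polynomial

variable {F : Type*} [Field F]

lemma coeff_polyOf (y : ℕ → F) (n k : ℕ) :
    (∑ j ∈ Finset.range n, C (y j) * X ^ (n - 1 - j)).coeff k
      = if k < n then y (n - 1 - k) else 0 := by
  rw [finset_sum_coeff]
  simp only [coeff_C_mul, coeff_X_pow, mul_ite, mul_one, mul_zero]
  split_ifs with hk
  · rw [Finset.sum_eq_single (n - 1 - k)]
    · rw [if_pos (by omega)]
    · intro j hj hne
      simp only [Finset.mem_range] at hj
      rw [if_neg (by omega)]
    · intro h
      simp only [Finset.mem_range] at h
      omega
  · apply Finset.sum_eq_zero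
    intro j hj
    simp only [Finset.mem_range] at hj
    rw [if_neg (by omega)]

lemma natDegree_polyOf_le (y : ℕ → F) (n : ℕ) :
    (∑ j ∈ Finset.range n, C (y j) * X ^ (n - 1 - j)).natDegree ≤ n - 1 := by
  rw [natDegree_le_iff_coeff_eq_zero]
  intro N hN
  rw [coeff_polyOf, if_neg (by omega)]

lemma coeff_polyOf_mul (y : ℕ → F) (n : ℕ) (f : Polynomial F) (t : ℕ) :
    ((∑ j ∈ Finset.range n, C (y j) * X ^ (n - 1 - j)) * f).coeff t
      = ∑ j ∈ Finset.range n,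
          y j * (if n - 1 - j ≤ t then f.coeff (t - (n - 1 - j)) else 0) := by
  rw [Finset.sum_mul, finset_sum_coeff]
  apply Finset.sum_congr rfl
  intro j _
  rw [show C (y j) * X ^ (n - 1 - j) * f = C (y j) * (f * X ^ (n - 1 - j)) by ring,
    coeff_C_mul, coeff_mul_X_pow']

/-- For polynomials `f, g` with `deg f = d ≥ deg g = m ≥ 1`, if
`v = deg gcd(f, g)`, then the `v`-th subresultant `sres_v(f,g) = det S_v(f,g)` is nonzero. -/
theorem sres_gcd_degree_ne_zero [DecidableEq F]
    (f g : Polynomial F) (d m v : ℕ)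
    (hf : f ≠ 0) (hg : g ≠ 0) (hd : f.natDegree = d) (hm : g.natDegree = m)
    (hdm : m ≤ d) (hm1 : 1 ≤ m)
    (hv : v = (EuclideanDomain.gcd f g).natDegree) :
    (sresMat f g d m v).det ≠ 0 := by
  intro hdet
  obtain ⟨x, hx0, hxv⟩ := Matrix.exists_mulVec_eq_zero_iff.mpr hdet
  have hhf : EuclideanDomain.gcd f g ∣ f := EuclideanDomain.gcd_dvd_left f g
  have hhg : EuclideanDomain.gcd f g ∣ g := EuclideanDomain.gcd_dvd_right f g
  have hvm : v ≤ m := by rw [hv, ← hm]; exact natDegree_le_of_dvd hhg hg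
  have hvd : v ≤ d := le_trans hvm hdm
  set yu : ℕ → F := fun j => if hj : j < m - v then x ⟨j, by omega⟩ else 0 with hyu
  set yw : ℕ → F := fun j => if hj : j < d - v then x ⟨(m - v) + j, by omega⟩ else 0 with hyw
  set u : Polynomial F := ∑ j ∈ Finset.range (m - v), C (yu j) * X ^ (m - v - 1 - j)
    with hu_def
  set w : Polynomial F := ∑ j ∈ Finset.range (d - v), C (yw j) * X ^ (d - v - 1 - j)
    with hw_def
  have hu_le : u.natDegree ≤ m - v - 1 := natDegree_polyOf_le yu (m - v)
  have hw_le : w.natDegree ≤ d - v - 1 := natDegree_polyOf_le yw (d - v)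
  -- all coefficients of u*f + w*g of degree ≥ v vanish
  have key : ∀ t : ℕ, v ≤ t → (u * f + w * g).coeff t = 0 := by
    intro t ht
    by_cases htop : t ≤ d + m - v - 1
    · set i : ℕ := d + m - v - 1 - t with hi_def
      have hiN : i < m + d - 2 * v := by omega
      have hmv : ((sresMat f g d m v).mulVec x) ⟨i, hiN⟩ = 0 := congrFun hxv _
      simp only [Matrix.mulVec, dotProduct] at hmv
      set Z : ℕ → F := fun j =>
        if hj : j < m + d - 2 * v then
          sresMat f g d m v ⟨i, hiN⟩ ⟨j, hj⟩ * x ⟨j, hj⟩ else 0 with hZ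
      have hsplit : (∑ j : Fin (m + d - 2 * v), sresMat f g d m v ⟨i, hiN⟩ j * x j)
          = (∑ j ∈ Finset.range (m - v), Z j)
            + ∑ j ∈ Finset.range (d - v), Z ((m - v) + j) := by
        calc (∑ j : Fin (m + d - 2 * v), sresMat f g d m v ⟨i, hiN⟩ j * x j)
            = ∑ j : Fin (m + d - 2 * v), Z ↑j := by
              apply Finset.sum_congr rfl
              intro j _
              simp only [hZ]
              rw [dif_pos j.isLt]
          _ = ∑ j ∈ Finset.range (m + d - 2 * v), Z j :=
              Fin.sum_univ_eq_sum_range Z _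
          _ = ∑ j ∈ Finset.range ((m - v) + (d - v)), Z j := by
              rw [show m + d - 2 * v = (m - v) + (d - v) by omega]
          _ = _ := Finset.sum_range_add Z (m - v) (d - v)
      rw [coeff_add, hu_def, hw_def, coeff_polyOf_mul, coeff_polyOf_mul]
      rw [hsplit] at hmv
      refine Eq.trans ?_ hmv
      congr 1
      · apply Finset.sum_congr rfl
        intro j hj
        simp only [Finset.mem_range] at hj
        simp only [hZ]
        rw [dif_pos (show j < m + d - 2 * v by omega)]
        simp only [sresMat, Matrix.of_apply, Fin.val_mk]
        rw [if_pos hj]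
        rw [mul_comm]
        have hx_eq : yu j = x ⟨j, by omega⟩ := by simp only [hyu]; exact dif_pos hj
        rw [hx_eq]
        congr 1
        rw [coeffZ]
        split_ifs with h1 h2 h2
        · congr 1
          omega
        · exfalso; omega
        · exfalso; omega
        · rfl
      · apply Finset.sum_congr rfl
        intro j hj
        simp only [Finset.mem_range] at hj
        simp only [hZ]
        rw [dif_pos (show (m - v) + j < m + d - 2 * v by omega)]
        simp only [sresMat, Matrix.of_apply, Fin.val_mk]
        rw [if_neg (show ¬((m - v) + j < m - v) by omega)]
        rw [mul_comm]
        have hx_eq : yw j = x ⟨(m - v) + j, by omega⟩ := by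
          simp only [hyw]; exact dif_pos hj
        rw [hx_eq]
        congr 1
        rw [coeffZ]
        split_ifs with h1 h2 h2
        · congr 1
          omega
        · exfalso; omega
        · exfalso; omega
        · rfl
    · have h1 : (u * f).coeff t = 0 := by
        rcases Nat.eq_zero_or_pos (m - v) with h0 | h0
        · rw [hu_def, h0, Finset.range_zero, Finset.sum_empty, zero_mul, coeff_zero]
        · apply coeff_eq_zero_of_natDegree_lt
          calc (u * f).natDegree ≤ u.natDegree + f.natDegree := natDegree_mul_le
            _ < t := by rw [hd]; omega
      have h2 : (w * g).coeff t = 0 := by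
        rcases Nat.eq_zero_or_pos (d - v) with h0 | h0
        · rw [hw_def, h0, Finset.range_zero, Finset.sum_empty, zero_mul, coeff_zero]
        · apply coeff_eq_zero_of_natDegree_lt
          calc (w * g).natDegree ≤ w.natDegree + g.natDegree := natDegree_mul_le
            _ < t := by rw [hm]; omega
      rw [coeff_add, h1, h2, add_zero]
  -- u*f + w*g = 0
  have hpz : u * f + w * g = 0 := by
    by_contra hp
    have hdvd : EuclideanDomain.gcd f g ∣ u * f + w * g :=
      dvd_add (hhf.mul_left u) (hhg.mul_left w)
    have hvle : v ≤ (u * f + w * g).natDegree := by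
      rw [hv]; exact natDegree_le_of_dvd hdvd hp
    exact leadingCoeff_ne_zero.mpr hp (key _ hvle)
  have hgcd0 : EuclideanDomain.gcd f g ≠ 0 := by
    intro h0
    exact hf (EuclideanDomain.gcd_eq_zero_iff.mp h0).1
  -- u = 0
  have hu0 : u = 0 := by
    by_contra hu
    have hmv1 : v < m := by
      by_contra h'
      apply hu
      rw [hu_def, show m - v = 0 by omega, Finset.range_zero, Finset.sum_empty]
    have huf : u * f ≠ 0 := mul_ne_zero hu hf
    have hwg : w * g = -(u * f) := by
      rw [eq_neg_iff_add_eq_zero, add_comm]; exact hpz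
    have hgd : g ∣ u * f := by
      rw [show u * f = -(w * g) by rw [hwg, neg_neg]]
      exact (dvd_mul_left g w).neg_right
    have hl : EuclideanDomain.lcm f g ∣ u * f :=
      EuclideanDomain.lcm_dvd (dvd_mul_left f u) hgd
    have hln : EuclideanDomain.lcm f g ≠ 0 := by
      intro h0
      apply mul_ne_zero hf hg
      have h1 := EuclideanDomain.gcd_mul_lcm f g
      rw [h0, mul_zero] at h1
      exact h1.symm
    have hdeg : v + (EuclideanDomain.lcm f g).natDegree = d + m := by
      have h1 := congrArg natDegree (EuclideanDomain.gcd_mul_lcm f g)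
      rw [natDegree_mul hgcd0 hln, natDegree_mul hf hg, hd, hm, ← hv] at h1
      exact h1
    have hle : (EuclideanDomain.lcm f g).natDegree ≤ (u * f).natDegree :=
      natDegree_le_of_dvd hl huf
    have hufle : (u * f).natDegree ≤ (m - v - 1) + d := by
      calc (u * f).natDegree ≤ u.natDegree + f.natDegree := natDegree_mul_le
        _ ≤ (m - v - 1) + d := by rw [hd]; omega
    omega
  have hw0 : w = 0 := by
    rw [hu0, zero_mul, zero_add] at hpz
    exact (mul_eq_zero.mp hpz).resolve_right hg
  -- conclude x = 0, contradiction
  apply hx0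
  funext i
  by_cases hi : (i : ℕ) < m - v
  · have h1 := coeff_polyOf yu (m - v) (m - v - 1 - (i : ℕ))
    rw [← hu_def, hu0, coeff_zero] at h1
    rw [if_pos (by omega)] at h1
    rw [show m - v - 1 - (m - v - 1 - (i : ℕ)) = (i : ℕ) by omega] at h1
    have h2 : yu (i : ℕ) = x i := by
      simp only [hyu]
      rw [dif_pos hi]
    rw [h2] at h1
    exact h1.symm
  · have hiN := i.isLt
    have hj : (i : ℕ) - (m - v) < d - v := by omega
    have h1 := coeff_polyOf yw (d - v) (d - v - 1 - ((i : ℕ) - (m - v)))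
    rw [← hw_def, hw0, coeff_zero] at h1
    rw [if_pos (by omega)] at h1
    rw [show d - v - 1 - (d - v - 1 - ((i : ℕ) - (m - v))) = (i : ℕ) - (m - v) by omega] at h1
    have h2 : yw ((i : ℕ) - (m - v)) = x i := by
      simp only [hyw]
      rw [dif_pos hj]
      exact congrArg x (Fin.ext (by simp only [Fin.val_mk]; omega))
    rw [h2] at h1
    exact h1.symm
end

section
/- Let F_q be a finite field, n = q−1, and g(x) = ∑_{i=0}^{n−1} g_i x^i ∈ F_q[x] a nonzero polynomial with exactly n−t distinct nonzero roots in F_q (so its evaluation on F_q^× has exactly t nonzero values). Then the t×t Toeplitz matrix T with entries T_{i,j} = g_{(n−t+j−i) mod n} for 0 ≤ i, j ≤ t−1 (i.e., the submatrix formed by the first t rows and last t columns of the n×n circulant matrix of (g_0,…,g_{n−1})) is invertible. -/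
open Polynomial Finset

/-- Over a finite field of size `q` with `n = q - 1`, let `g = ∑ g_i x^i` be a
nonzero polynomial of degree `< n` with exactly `n - t` distinct nonzero roots in `F`.
Then the `t × t` Toeplitz matrix `T` with `T_{i,j} = g_{(n-t+j-i) mod n}` (the top-right
`t × t` corner of the circulant matrix of `(g_0, …, g_{n-1})`) is invertible. -/
theorem toeplitz_corner_invertible {F : Type*} [Field F] [Fintype F]
    (q n t : ℕ) (hq : Fintype.card F = q) (hn : n = q - 1)
    (g : Polynomial F) (hg : g ≠ 0) (hgdeg : g.natDegree < n)
    (ht1 : 1 ≤ t) (htn : t ≤ n)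
    (hroots : Nat.card {γ : F // γ ≠ 0 ∧ g.eval γ = 0} = n - t) :
    (Matrix.of fun i j : Fin t =>
      g.coeff ((n - t + (j : ℕ) + n - (i : ℕ)) % n)).det ≠ 0 := by
  classical
  intro hdet
  have hn1 : 1 ≤ n := le_trans ht1 htn
  obtain ⟨c, hc0, hc⟩ := Matrix.exists_mulVec_eq_zero_iff.mpr hdet
  -- the polynomial d
  set d : F[X] := ∑ j : Fin t, C (c j) * X ^ (t - (j : ℕ)) with hd
  -- coefficients of g * d
  have coeffprod : ∀ m : ℕ, (g * d).coeff m =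
      ∑ j : Fin t, if t - (j : ℕ) ≤ m then c j * g.coeff (m - (t - (j : ℕ))) else 0 := by
    intro m
    rw [hd, Finset.mul_sum, Polynomial.finset_sum_coeff]
    refine Finset.sum_congr rfl fun j _ => ?_
    rw [show g * (C (c j) * X ^ (t - (j : ℕ))) = (C (c j) * g) * X ^ (t - (j : ℕ)) by ring,
      coeff_mul_X_pow', coeff_C_mul]
  -- the reduced polynomial h
  set h : F[X] := ∑ k ∈ Finset.range n,
    C ((g * d).coeff k + (g * d).coeff (k + n)) * X ^ k with hh
  have hcoeff : ∀ k, k < n → h.coeff k = (g * d).coeff k + (g * d).coeff (k + n) := by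
    intro k hk
    rw [hh, Polynomial.finset_sum_coeff]
    rw [Finset.sum_eq_single k (fun b _ hb => by
        rw [coeff_C_mul, coeff_X_pow, if_neg (fun hkb => hb hkb.symm), mul_zero])
      (fun habs => absurd (Finset.mem_range.mpr hk) habs)]
    rw [coeff_C_mul, coeff_X_pow, if_pos rfl, mul_one]
  have hcoeff_hi : ∀ k, n ≤ k → h.coeff k = 0 := by
    intro k hk
    rw [hh, Polynomial.finset_sum_coeff]
    refine Finset.sum_eq_zero fun b hb => ?_
    rw [coeff_C_mul, coeff_X_pow, if_neg, mul_zero]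
    have := Finset.mem_range.mp hb
    omega
  -- kernel equations give vanishing coefficients
  have key : ∀ i : Fin t,
      (g * d).coeff ((n - (i : ℕ)) % n) + (g * d).coeff ((n - (i : ℕ)) % n + n) = 0 := by
    intro i
    have hrow := congrFun hc i
    simp only [Matrix.mulVec, dotProduct, Matrix.of_apply, Pi.zero_apply] at hrow
    rw [coeffprod, coeffprod, ← Finset.sum_add_distrib]
    refine Eq.trans (Finset.sum_congr rfl fun j _ => ?_) hrow
    have hjt : (j : ℕ) < t := j.isLt
    have hit : (i : ℕ) < t := i.isLt
    rcases Nat.eq_zero_or_pos (i : ℕ) with hi0 | hipos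
    · rw [hi0]
      have hk : (n - 0) % n = 0 := by simp
      rw [hk, if_neg (by omega), if_pos (by omega), zero_add]
      have e1 : 0 + n - (t - (j : ℕ)) = n - t + (j : ℕ) := by omega
      have e2 : (n - t + (j : ℕ) + n - 0) % n = n - t + (j : ℕ) := by
        rw [Nat.mod_eq_sub_mod (by omega), Nat.mod_eq_of_lt (by omega)]
        omega
      rw [e1, e2, mul_comm]
    · have hk : (n - (i : ℕ)) % n = n - (i : ℕ) := Nat.mod_eq_of_lt (by omega)
      rw [hk]
      by_cases hcase : t - (j : ℕ) ≤ n - (i : ℕ)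
      · rw [if_pos hcase, if_pos (by omega)]
        have e2 : (n - t + (j : ℕ) + n - (i : ℕ)) % n = n - (i : ℕ) - (t - (j : ℕ)) := by
          rw [Nat.mod_eq_sub_mod (by omega), Nat.mod_eq_of_lt (by omega)]
          omega
        have e3 : g.coeff (n - (i : ℕ) + n - (t - (j : ℕ))) = 0 :=
          coeff_eq_zero_of_natDegree_lt (by omega)
        rw [e2, e3, mul_zero, add_zero, mul_comm]
      · rw [if_neg hcase, if_pos (by omega), zero_add]
        have e2 : (n - t + (j : ℕ) + n - (i : ℕ)) % n = n - (i : ℕ) + n - (t - (j : ℕ)) := by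
          rw [Nat.mod_eq_of_lt (by omega)]
          omega
        rw [e2, mul_comm]
  -- h has small degree
  have hhdeg : h.natDegree ≤ n - t := by
    rw [Polynomial.natDegree_le_iff_coeff_eq_zero]
    intro m hm
    by_cases hmn : m < n
    · have hi : n - m < t := by omega
      have := key ⟨n - m, hi⟩
      simp only at this
      have hk : (n - (n - m)) % n = m := by
        rw [Nat.mod_eq_of_lt (by omega)]
        omega
      rw [hk] at this
      rw [hcoeff m hmn, this]
    · exact hcoeff_hi m (by omega)
  -- h vanishes at 0
  have hzero : h.coeff 0 = 0 := by
    have := key ⟨0, by omega⟩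
    simp only at this
    have hk : (n - 0) % n = 0 := by simp
    rw [hk] at this
    rw [hcoeff 0 (by omega), this]
  -- evaluation of h at nonzero points
  have hdd : d.natDegree ≤ t :=
    natDegree_sum_le_of_forall_le _ _ fun j _ =>
      le_trans (natDegree_C_mul_le _ _) (le_trans (natDegree_X_pow_le _) (by omega))
  have hgd : (g * d).natDegree < n + n :=
    lt_of_le_of_lt natDegree_mul_le (by omega)
  have heval : ∀ γ : F, γ ≠ 0 → h.eval γ = g.eval γ * d.eval γ := by
    intro γ hγ
    have hγn : γ ^ n = 1 := by
      have := FiniteField.pow_card_sub_one_eq_one γ hγ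
      rwa [hq, ← hn] at this
    calc h.eval γ
        = ∑ k ∈ Finset.range n,
            ((g * d).coeff k * γ ^ k + (g * d).coeff (k + n) * γ ^ k) := by
          rw [hh, Polynomial.eval_finset_sum]
          exact Finset.sum_congr rfl fun k _ => by simp [add_mul]
      _ = ∑ k ∈ Finset.range n, (g * d).coeff k * γ ^ k
            + ∑ k ∈ Finset.range n, (g * d).coeff (k + n) * γ ^ k :=
          Finset.sum_add_distrib
      _ = ∑ k ∈ Finset.range n, (g * d).coeff k * γ ^ k
            + ∑ k ∈ Finset.range n, (g * d).coeff (n + k) * γ ^ (n + k) := by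
          refine congrArg _ (Finset.sum_congr rfl fun k _ => ?_)
          rw [pow_add, hγn, one_mul, add_comm n k]
      _ = ∑ k ∈ Finset.range (n + n), (g * d).coeff k * γ ^ k :=
          (Finset.sum_range_add _ n n).symm
      _ = (g * d).eval γ := (eval_eq_sum_range' hgd γ).symm
      _ = g.eval γ * d.eval γ := eval_mul
  -- the auxiliary polynomial c'
  set c' : F[X] := ∑ j : Fin t, C (c j) * X ^ (t - 1 - (j : ℕ)) with hc'
  have hdc' : d = X * c' := by
    rw [hd, hc', Finset.mul_sum]
    refine Finset.sum_congr rfl fun j _ => ?_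
    rw [show t - (j : ℕ) = (t - 1 - (j : ℕ)) + 1 by omega]
    ring
  have hc'deg : c'.natDegree ≤ t - 1 :=
    natDegree_sum_le_of_forall_le _ _ fun j _ =>
      le_trans (natDegree_C_mul_le _ _) (le_trans (natDegree_X_pow_le _) (by omega))
  obtain ⟨j₀, hj₀⟩ := Function.ne_iff.mp hc0
  have hc'ne : c' ≠ 0 := by
    intro habs
    apply hj₀
    have : c'.coeff (t - 1 - (j₀ : ℕ)) = c j₀ := by
      rw [hc', Polynomial.finset_sum_coeff]
      rw [Finset.sum_eq_single j₀ (fun b _ hb => by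
          rw [coeff_C_mul, coeff_X_pow, if_neg (fun hkb => by
            apply hb; apply Fin.ext
            have := b.isLt; have := j₀.isLt; omega), mul_zero])
        (fun habs2 => absurd (Finset.mem_univ j₀) habs2)]
      rw [coeff_C_mul, coeff_X_pow, if_pos rfl, mul_one]
    rw [habs, Polynomial.coeff_zero] at this
    exact this.symm
  -- counting: find γ ≠ 0 with g γ ≠ 0 and d γ ≠ 0
  set S : Finset F := Finset.univ.filter (fun γ : F => γ ≠ 0) with hSdef
  have hScard : S.card = n := by
    have : S = ({0} : Finset F)ᶜ := by
      ext γ; simp [hSdef]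
    rw [this, Finset.card_compl, Finset.card_singleton, hq, ← hn]
  set Ag : Finset F := S.filter (fun γ => g.eval γ = 0) with hAgdef
  have hAgcard : Ag.card = n - t := by
    have h1 : Nat.card {γ : F // γ ≠ 0 ∧ g.eval γ = 0} =
        (Finset.univ.filter (fun γ : F => γ ≠ 0 ∧ g.eval γ = 0)).card := by
      rw [Nat.card_eq_fintype_card, Fintype.card_subtype]
    have h2 : Ag = Finset.univ.filter (fun γ : F => γ ≠ 0 ∧ g.eval γ = 0) := by
      rw [hAgdef, hSdef, Finset.filter_filter]
    rw [h2, ← h1, hroots]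
  set Ad : Finset F := S.filter (fun γ => d.eval γ = 0) with hAddef
  have hAdcard : Ad.card ≤ t - 1 := by
    have hsub : Ad ⊆ c'.roots.toFinset := by
      intro γ hγ
      rw [hAddef, Finset.mem_filter, hSdef, Finset.mem_filter] at hγ
      obtain ⟨⟨-, hγ0⟩, hγd⟩ := hγ
      rw [Multiset.mem_toFinset, Polynomial.mem_roots hc'ne]
      rw [hdc'] at hγd
      simp only [eval_mul, eval_X] at hγd
      rcases mul_eq_zero.mp hγd with h | h
      · exact absurd h hγ0
      · exact h
    calc Ad.card ≤ c'.roots.toFinset.card := Finset.card_le_card hsub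
      _ ≤ Multiset.card c'.roots := Multiset.toFinset_card_le _
      _ ≤ c'.natDegree := Polynomial.card_roots' c'
      _ ≤ t - 1 := hc'deg
  have hunion : (Ag ∪ Ad).card < S.card := by
    calc (Ag ∪ Ad).card ≤ Ag.card + Ad.card := Finset.card_union_le _ _
      _ ≤ (n - t) + (t - 1) := by omega
      _ < n := by omega
      _ = S.card := hScard.symm
  have hnotsub : ¬ S ⊆ Ag ∪ Ad := fun habs =>
    absurd (Finset.card_le_card habs) (by omega)
  obtain ⟨γ, hγS, hγn⟩ := Finset.not_subset.mp hnotsub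
  rw [Finset.mem_union, not_or] at hγn
  obtain ⟨hγAg, hγAd⟩ := hγn
  have hγ0 : γ ≠ 0 := (Finset.mem_filter.mp hγS).2
  have hγg : g.eval γ ≠ 0 := fun habs =>
    hγAg (Finset.mem_filter.mpr ⟨hγS, habs⟩)
  have hγd : d.eval γ ≠ 0 := fun habs =>
    hγAd (Finset.mem_filter.mpr ⟨hγS, habs⟩)
  have hhne : h ≠ 0 := by
    intro habs
    have := heval γ hγ0
    rw [habs] at this
    simp only [eval_zero] at this
    exact mul_ne_zero hγg hγd this.symm
  -- roots of h
  have hsub : insert (0 : F) Ag ⊆ h.roots.toFinset := by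
    intro γ' hγ'
    rw [Multiset.mem_toFinset, Polynomial.mem_roots hhne]
    rcases Finset.mem_insert.mp hγ' with h0 | hAg'
    · rw [h0, Polynomial.IsRoot, ← Polynomial.coeff_zero_eq_eval_zero]
      exact hzero
    · rw [hAgdef, Finset.mem_filter, hSdef, Finset.mem_filter] at hAg'
      obtain ⟨⟨-, h1⟩, h2⟩ := hAg'
      rw [Polynomial.IsRoot, heval γ' h1, h2, zero_mul]
  have h0notin : (0 : F) ∉ Ag := by
    rw [hAgdef, hSdef]
    simp
  have hfinal : n - t + 1 ≤ n - t := by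
    calc n - t + 1 = (insert (0 : F) Ag).card := by
          rw [Finset.card_insert_of_notMem h0notin, hAgcard]
      _ ≤ h.roots.toFinset.card := Finset.card_le_card hsub
      _ ≤ Multiset.card h.roots := Multiset.toFinset_card_le _
      _ ≤ h.natDegree := Polynomial.card_roots' h
      _ ≤ n - t := hhdeg
  omega
end

section
/- Let F_q be a finite field, n = q−1, and let g(x) = ∑_{i=0}^{n−1} g_i x^i be a nonzero polynomial with exactly n−t distinct nonzero roots in F_q, where 2t ≤ n. If η = (η_1,…,η_t) ∈ F_q^t is the unique solution of the t×t Toeplitz system g_{(i) mod n} = ∑_{j=1}^{t} η_j g_{(i+j) mod n} for n−2t ≤ i ≤ n−t−1, then the full linear recurrence g_i = ∑_{j=1}^{t} η_j g_{i+j} holds for all 0 ≤ i ≤ n−t−1. -/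
open Polynomial

/-- Over a finite field of size `q` with `n = q - 1`, let `g = ∑ g_i x^i` be a
nonzero polynomial of degree `< n` with exactly `n - t` distinct nonzero roots, `2t ≤ n`.
If `η = (η_1, …, η_t)` solves the `t × t` Toeplitz system
`g_i = ∑_{j=1}^t η_j g_{i+j}` for `n - 2t ≤ i ≤ n - t - 1`, then the recurrence
`g_i = ∑_{j=1}^t η_j g_{i+j}` holds for all `0 ≤ i ≤ n - t - 1`. -/
theorem toeplitz_solution_extends_recurrence {F : Type*} [Field F] [Fintype F]
    (q n t : ℕ) (hq : Fintype.card F = q) (hn : n = q - 1)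
    (g : Polynomial F) (hg : g ≠ 0) (hgdeg : g.natDegree < n)
    (ht1 : 1 ≤ t) (h2t : 2 * t ≤ n)
    (hroots : Nat.card {γ : F // γ ≠ 0 ∧ g.eval γ = 0} = n - t)
    (η : Fin t → F)
    (hη : ∀ i : ℕ, n - 2 * t ≤ i → i ≤ n - t - 1 →
      g.coeff i = ∑ j : Fin t, η j * g.coeff (i + (j : ℕ) + 1)) :
    ∀ i : ℕ, i ≤ n - t - 1 →
      g.coeff i = ∑ j : Fin t, η j * g.coeff (i + (j : ℕ) + 1) := by
  classical
  have hq1 : 1 ≤ q := by rw [← hq]; exact Fintype.card_pos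
  have htn : t ≤ n := by omega
  -- the set of nonzero non-roots
  set s : Finset F := Finset.univ.filter (fun β => β ≠ 0 ∧ g.eval β ≠ 0) with hs_def
  have hs0 : (Finset.univ.filter (fun β : F => β ≠ 0)).card = n := by
    rw [Finset.filter_ne', Finset.card_erase_of_mem (Finset.mem_univ 0),
      Finset.card_univ, hq, hn]
  have hscard : s.card = t := by
    have hsplit := Finset.card_filter_add_card_filter_not
      (s := Finset.univ.filter (fun β : F => β ≠ 0)) (fun β : F => g.eval β = 0)
    have h1 : ((Finset.univ.filter (fun β : F => β ≠ 0)).filter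
        (fun β : F => g.eval β = 0)).card = n - t := by
      rw [← hroots, Nat.card_eq_fintype_card, Fintype.card_subtype]
      congr 1
      ext β
      simp only [Finset.mem_filter, Finset.mem_univ, true_and]
    have h2 : (Finset.univ.filter (fun β : F => β ≠ 0)).filter
        (fun β : F => ¬ g.eval β = 0) = s := by
      rw [Finset.filter_filter]
    rw [h1, h2, hs0] at hsplit
    omega
  -- enumerate the non-roots
  have hscardF : Fintype.card {x // x ∈ s} = t := by rw [Fintype.card_coe, hscard]
  set e : Fin t ≃ {x // x ∈ s} := (Fintype.equivFinOfCardEq hscardF).symm with he_def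
  set b : Fin t → F := fun j => (e j : F) with hb_def
  have hbinj : Function.Injective b := fun i j h => e.injective (Subtype.ext h)
  have hbmem : ∀ j, b j ∈ s := fun j => (e j).2
  have hb0 : ∀ j, b j ≠ 0 := fun j => ((Finset.mem_filter.mp (hbmem j)).2).1
  have hbe : ∀ j, g.eval (b j) ≠ 0 := fun j => ((Finset.mem_filter.mp (hbmem j)).2).2
  set x : Fin t → F := fun j => (b j)⁻¹ with hx_def
  have hxinj : Function.Injective x := fun i j h => hbinj (inv_injective h)
  have hx0 : ∀ j, x j ≠ 0 := fun j => inv_ne_zero (hb0 j)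
  have hbx : ∀ j, b j * x j = 1 := fun j => mul_inv_cancel₀ (hb0 j)
  -- sums over s are sums over Fin t
  have hsum : ∀ f : F → F, ∑ β ∈ s, f β = ∑ j : Fin t, f (b j) := by
    intro f
    rw [← Finset.sum_coe_sort s f, ← Equiv.sum_comp e (fun z : {x // x ∈ s} => f (z : F))]
  -- the DFT formula for coefficients
  have key : ∀ i : ℕ, i < n → g.coeff i = -∑ j : Fin t, g.eval (b j) * x j ^ i := by
    intro i hi
    have hstep1 : ∑ α : Fˣ, g.eval (α : F) * ((α : F)⁻¹) ^ i = -g.coeff i := by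
      have hinv : ∀ α : Fˣ, ((α : F)⁻¹) ^ i = (α : F) ^ (n - i) := by
        intro α
        have hα : (α : F) ^ n = 1 := by
          have h1 : α ^ n = 1 := by
            rw [hn, ← hq, ← Fintype.card_units]
            exact pow_card_eq_one
          rw [← Units.val_pow_eq_pow_val, h1, Units.val_one]
        have : (α : F) ^ (n - i) * (α : F) ^ i = 1 := by
          rw [← pow_add]
          rw [Nat.sub_add_cancel (le_of_lt hi)]
          exact hα
        rw [inv_pow]
        exact inv_eq_of_mul_eq_one_right (by rw [mul_comm]; exact this)
      calc ∑ α : Fˣ, g.eval (α : F) * ((α : F)⁻¹) ^ i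
          = ∑ α : Fˣ, ∑ k ∈ Finset.range n, g.coeff k * (α : F) ^ (k + (n - i)) := by
            refine Finset.sum_congr rfl (fun α _ => ?_)
            rw [eval_eq_sum_range' hgdeg, Finset.sum_mul]
            refine Finset.sum_congr rfl (fun k _ => ?_)
            rw [hinv α, mul_assoc, pow_add]
        _ = ∑ k ∈ Finset.range n, g.coeff k * ∑ α : Fˣ, (α : F) ^ (k + (n - i)) := by
            rw [Finset.sum_comm]
            exact Finset.sum_congr rfl (fun k _ => by rw [Finset.mul_sum])
        _ = ∑ k ∈ Finset.range n, g.coeff k * (if k = i then (-1 : F) else 0) := by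
            refine Finset.sum_congr rfl (fun k hk => ?_)
            rw [FiniteField.sum_pow_units, hq, ← hn]
            congr 1
            have hk' : k < n := Finset.mem_range.mp hk
            by_cases hki : k = i
            · subst hki
              have : k + (n - k) = n := by omega
              simp [this]
            · rw [if_neg hki, if_neg]
              intro ⟨c, hc⟩
              have hpos : 0 < k + (n - i) := by omega
              have hlt : k + (n - i) < 2 * n := by omega
              have hcl : 1 ≤ c := by
                by_contra h
                push_neg at h
                rw [Nat.lt_one_iff] at h
                subst h
                simp at hc
                omega
              have hcu : c < 2 := by
                by_contra h
                push_neg at h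
                have h2 : n * 2 ≤ n * c := Nat.mul_le_mul_left n h
                omega
              have hc1 : c = 1 := by omega
              rw [hc1, mul_one] at hc
              omega
        _ = -g.coeff i := by
            simp only [mul_ite, mul_neg_one, mul_zero]
            rw [Finset.sum_ite_eq' (Finset.range n) i (fun k => -g.coeff k),
              if_pos (Finset.mem_range.mpr hi)]
    -- restrict the sum over units to the non-roots
    have hstep2 : ∑ α : Fˣ, g.eval (α : F) * ((α : F)⁻¹) ^ i
        = ∑ j : Fin t, g.eval (b j) * x j ^ i := by
      have himg : Finset.univ.image (fun α : Fˣ => (α : F)) = Finset.univ.erase 0 := by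
        ext β
        simp only [Finset.mem_image, Finset.mem_erase, Finset.mem_univ, and_true, true_and]
        constructor
        · rintro ⟨α, rfl⟩; exact α.ne_zero
        · intro hβ; exact ⟨Units.mk0 β hβ, rfl⟩
      calc ∑ α : Fˣ, g.eval (α : F) * ((α : F)⁻¹) ^ i
          = ∑ β ∈ Finset.univ.erase 0, g.eval β * (β⁻¹) ^ i := by
            rw [← himg]
            exact (Finset.sum_image (g := fun α : Fˣ => (α : F))
              (f := fun β => g.eval β * (β⁻¹) ^ i) (fun a _ b _ h => Units.ext h)).symm
        _ = ∑ β ∈ s, g.eval β * (β⁻¹) ^ i := by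
            refine (Finset.sum_subset ?_ ?_).symm
            · intro β hβ
              have := Finset.mem_filter.mp hβ
              exact Finset.mem_erase.mpr ⟨this.2.1, Finset.mem_univ β⟩
            · intro β hβ hβs
              have hβ0 : β ≠ 0 := (Finset.mem_erase.mp hβ).1
              have : g.eval β = 0 := by
                by_contra h
                exact hβs (Finset.mem_filter.mpr ⟨Finset.mem_univ β, hβ0, h⟩)
              rw [this, zero_mul]
        _ = ∑ j : Fin t, g.eval (b j) * x j ^ i := hsum _
    rw [← hstep2, hstep1]
    exact (neg_neg _).symm
  -- the recurrence gadget
  have gadget : ∀ (η' : Fin t → F) (i : ℕ), i ≤ n - t - 1 →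
      g.coeff i - ∑ j : Fin t, η' j * g.coeff (i + (j : ℕ) + 1)
      = -∑ m : Fin t, g.eval (b m) * x m ^ i *
          (1 - ∑ j : Fin t, η' j * x m ^ ((j : ℕ) + 1)) := by
    intro η' i hi
    have hi' : i < n := by omega
    have hrw : ∀ j : Fin t, η' j * g.coeff (i + (j : ℕ) + 1)
        = -∑ m : Fin t, η' j * (g.eval (b m) * (x m ^ i * x m ^ ((j : ℕ) + 1))) := by
      intro j
      rw [key (i + (j : ℕ) + 1) (by omega), mul_neg, Finset.mul_sum]
      congr 1
      refine Finset.sum_congr rfl (fun m _ => ?_)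
      rw [← pow_add]
      ring_nf
    rw [key i hi']
    simp only [hrw, Finset.sum_neg_distrib, sub_neg_eq_add, mul_sub, mul_one,
      Finset.mul_sum, Finset.sum_sub_distrib, neg_sub]
    rw [Finset.sum_comm, add_comm, ← sub_eq_add_neg]
    congr 1
    exact Finset.sum_congr rfl fun m _ => Finset.sum_congr rfl fun j _ => by ring
  -- the locator polynomial and the canonical solution η*
  set Q : Polynomial F := ∏ m : Fin t, (X - C (b m)) with hQ_def
  have hQmonic : Q.Monic := monic_prod_of_monic _ _ (fun m _ => monic_X_sub_C (b m))
  have hQdeg : Q.natDegree = t := by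
    rw [hQ_def, natDegree_prod _ _ (fun m _ => X_sub_C_ne_zero (b m))]
    simp [natDegree_X_sub_C]
  have hQroot : ∀ m : Fin t, Q.eval (b m) = 0 := by
    intro m
    rw [hQ_def, eval_prod]
    exact Finset.prod_eq_zero (Finset.mem_univ m) (by simp)
  set ηs : Fin t → F := fun j => -Q.coeff (t - 1 - (j : ℕ)) with hηs_def
  have hrel : ∀ m : Fin t, (b m) ^ t = ∑ j : Fin t, ηs j * (b m) ^ (t - 1 - (j : ℕ)) := by
    intro m
    have h0 : (0 : F) = ∑ k ∈ Finset.range (t + 1), Q.coeff k * (b m) ^ k := by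
      rw [← hQroot m, eval_eq_sum_range' (by omega : Q.natDegree < t + 1)]
    rw [Finset.sum_range_succ] at h0
    have hct : Q.coeff t = 1 := by
      have := hQmonic.coeff_natDegree
      rwa [hQdeg] at this
    rw [hct, one_mul] at h0
    have h1 : (b m) ^ t = ∑ k ∈ Finset.range t, -Q.coeff k * (b m) ^ k := by
      have := h0
      rw [eq_comm, add_eq_zero_iff_eq_neg] at this
      rw [← neg_eq_iff_eq_neg] at this
      rw [← this, ← Finset.sum_neg_distrib]
      exact Finset.sum_congr rfl fun k _ => by ring
    have h2 : ∑ j : Fin t, ηs j * (b m) ^ (t - 1 - (j : ℕ))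
        = ∑ k ∈ Finset.range t, -Q.coeff (t - 1 - k) * (b m) ^ (t - 1 - k) := by
      rw [← Fin.sum_univ_eq_sum_range (fun k => -Q.coeff (t - 1 - k) * (b m) ^ (t - 1 - k)) t]
    rw [h1, h2, Finset.sum_range_reflect (fun k => -Q.coeff k * (b m) ^ k) t]
  have hcond : ∀ m : Fin t, 1 - ∑ j : Fin t, ηs j * x m ^ ((j : ℕ) + 1) = 0 := by
    intro m
    have hxt : (b m) ^ t * x m ^ t = 1 := by
      rw [← mul_pow, hbx m, one_pow]
    have hterm : ∀ j : Fin t, ((b m) ^ (t - 1 - (j : ℕ))) * x m ^ t = x m ^ ((j : ℕ) + 1) := by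
      intro j
      have hj : (j : ℕ) < t := j.2
      have hsplit : t = (t - 1 - (j : ℕ)) + ((j : ℕ) + 1) := by omega
      calc ((b m) ^ (t - 1 - (j : ℕ))) * x m ^ t
          = ((b m) ^ (t - 1 - (j : ℕ))) * (x m ^ (t - 1 - (j : ℕ)) * x m ^ ((j : ℕ) + 1)) := by
            rw [← pow_add, ← hsplit]
        _ = ((b m) * x m) ^ (t - 1 - (j : ℕ)) * x m ^ ((j : ℕ) + 1) := by
            rw [mul_pow]; ring
        _ = x m ^ ((j : ℕ) + 1) := by rw [hbx m, one_pow, one_mul]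
    calc 1 - ∑ j : Fin t, ηs j * x m ^ ((j : ℕ) + 1)
        = ((b m) ^ t - ∑ j : Fin t, ηs j * (b m) ^ (t - 1 - (j : ℕ))) * x m ^ t := by
          rw [sub_mul, Finset.sum_mul, hxt]
          congr 1
          exact (Finset.sum_congr rfl fun j _ => by rw [mul_assoc, hterm j]).symm
      _ = 0 := by rw [hrel m, sub_self, zero_mul]
  -- η* satisfies the full recurrence
  have hstar : ∀ i : ℕ, i ≤ n - t - 1 →
      g.coeff i = ∑ j : Fin t, ηs j * g.coeff (i + (j : ℕ) + 1) := by
    intro i hi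
    have h := gadget ηs i hi
    have h0 : g.coeff i - ∑ j : Fin t, ηs j * g.coeff (i + (j : ℕ) + 1) = 0 := by
      rw [h]
      simp only [hcond, mul_zero, Finset.sum_const_zero, neg_zero]
    exact sub_eq_zero.mp h0
  -- uniqueness: η = η*
  set δ : Fin t → F := fun j => η j - ηs j with hδ_def
  have hδ0 : ∀ i : ℕ, n - 2 * t ≤ i → i ≤ n - t - 1 →
      ∑ j : Fin t, δ j * g.coeff (i + (j : ℕ) + 1) = 0 := by
    intro i h1 h2
    have := hη i h1 h2
    have h' := hstar i h2
    simp only [hδ_def, sub_mul, Finset.sum_sub_distrib]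
    rw [← this, ← h', sub_self]
  have hD : ∀ m : Fin t, ∑ j : Fin t, δ j * x m ^ (j : ℕ) = 0 := by
    set w : Fin t → F := fun m =>
      g.eval (b m) * x m ^ (n - 2 * t + 1) * (∑ j : Fin t, δ j * x m ^ (j : ℕ)) with hw_def
    have hw : w = 0 := by
      apply Matrix.eq_zero_of_forall_pow_sum_mul_pow_eq_zero hxinj
      intro r
      have hi1 : n - 2 * t ≤ n - 2 * t + (r : ℕ) := Nat.le_add_right _ _
      have hi2 : n - 2 * t + (r : ℕ) ≤ n - t - 1 := by
        have := r.2
        omega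
      have h := hδ0 (n - 2 * t + (r : ℕ)) hi1 hi2
      have hcoe : ∀ j : Fin t, g.coeff (n - 2 * t + (r : ℕ) + (j : ℕ) + 1)
          = -∑ m : Fin t, g.eval (b m) *
              (x m ^ (n - 2 * t + 1) * (x m ^ (j : ℕ) * x m ^ (r : ℕ))) := by
        intro j
        have hlt : n - 2 * t + (r : ℕ) + (j : ℕ) + 1 < n := by
          have := r.2; have := j.2; omega
        rw [key _ hlt]
        congr 1
        refine Finset.sum_congr rfl fun m _ => ?_
        congr 1
        rw [← pow_add, ← pow_add]
        congr 1
        have := r.2; have := j.2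
        omega
      calc ∑ m : Fin t, w m * x m ^ (r : ℕ)
          = ∑ m : Fin t, ∑ j : Fin t,
              δ j * (g.eval (b m) *
                (x m ^ (n - 2 * t + 1) * (x m ^ (j : ℕ) * x m ^ (r : ℕ)))) := by
            refine Finset.sum_congr rfl fun m _ => ?_
            simp only [hw_def, Finset.mul_sum, Finset.sum_mul]
            exact Finset.sum_congr rfl fun j _ => by ring
        _ = ∑ j : Fin t, δ j * -g.coeff (n - 2 * t + (r : ℕ) + (j : ℕ) + 1) := by
            rw [Finset.sum_comm]
            refine Finset.sum_congr rfl fun j _ => ?_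
            rw [hcoe j, neg_neg, Finset.mul_sum]
        _ = 0 := by
            simp only [mul_neg]
            rw [Finset.sum_neg_distrib, h, neg_zero]
    intro m
    have hwm : w m = 0 := congrFun hw m
    have hne : g.eval (b m) * x m ^ (n - 2 * t + 1) ≠ 0 :=
      mul_ne_zero (hbe m) (pow_ne_zero _ (hx0 m))
    rw [hw_def] at hwm
    simp only [] at hwm
    rcases mul_eq_zero.mp hwm with h | h
    · exact absurd h hne
    · exact h
  have hδzero : δ = 0 :=
    Matrix.eq_zero_of_forall_index_sum_mul_pow_eq_zero hxinj hD
  have hηeq : ∀ j : Fin t, η j = ηs j := by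
    intro j
    have := congrFun hδzero j
    simp only [hδ_def, Pi.zero_apply] at this
    exact sub_eq_zero.mp this
  intro i hi
  rw [Finset.sum_congr rfl fun j _ => by rw [hηeq j]]
  exact hstar i hi
end

section
/- Let F_q be a finite field with q elements and g(x) ∈ F_q[x] a nonzero polynomial of degree at most q−2. Then the rank of the (q−1)×(q−1) circulant matrix of the coefficient vector of g equals the Hamming weight of the evaluation vector (g(γ))_{γ ∈ F_q^×}, i.e., the number of nonzero elements γ of F_q with g(γ) ≠ 0. -/
open Polynomial Matrix

private lemma pow_mod_of_pow_eq_one {F : Type*} [Field F] {a : F} {n : ℕ}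
    (h : a ^ n = 1) (m : ℕ) : a ^ m = a ^ (m % n) := by
  conv_lhs => rw [← Nat.div_add_mod m n, pow_add, pow_mul, h, one_pow, one_mul]

/-- König–Rado, evaluation-weight form: For a nonzero polynomial `g` of degree
at most `q - 2` over a finite field of size `q`, the rank of the `(q-1)×(q-1)` circulant
matrix of its coefficient vector equals the number of nonzero `γ ∈ F` with `g(γ) ≠ 0`. -/
theorem circulant_rank_eq_eval_weight {F : Type*} [Field F] [Fintype F]
    (q : ℕ) (hq : Fintype.card F = q)
    (g : Polynomial F) (hg : g ≠ 0) (hgdeg : g.natDegree ≤ q - 2) :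
    (Matrix.of fun i j : Fin (q - 1) => g.coeff (((j : ℕ) + (q - 1) - (i : ℕ)) % (q - 1))).rank
      = Nat.card {γ : F // γ ≠ 0 ∧ g.eval γ ≠ 0} := by
  classical
  have hq2 : 2 ≤ q := hq ▸ Fintype.one_lt_card
  set n := q - 1 with hn
  have hdeg : g.natDegree < n := by omega
  haveI : NeZero n := ⟨by omega⟩
  have hcard : Fintype.card {γ : F // γ ≠ 0} = n := by
    have := Fintype.card_subtype_compl (fun γ : F => γ = 0)
    simp only [Fintype.card_subtype_eq (0 : F), hq] at this
    exact this
  let e : Fin n ≃ {γ : F // γ ≠ 0} := (Fintype.equivFinOfCardEq hcard).symm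
  let v : Fin n → F := fun j => (e j : F)
  have hv : Function.Injective v :=
    Subtype.val_injective.comp e.injective
  have hvne : ∀ j, v j ≠ 0 := fun j => (e j).2
  have hvpow : ∀ j, v j ^ n = 1 := fun j => by
    have := FiniteField.pow_card_sub_one_eq_one (v j) (hvne j)
    rwa [hq] at this
  set G : Matrix (Fin n) (Fin n) F :=
    Matrix.of fun i j : Fin n => g.coeff (((j : ℕ) + n - (i : ℕ)) % n) with hG
  set W : Matrix (Fin n) (Fin n) F := (Matrix.vandermonde v)ᵀ with hW
  set D : Matrix (Fin n) (Fin n) F := Matrix.diagonal (fun j => g.eval (v j)) with hD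
  have hWdet : IsUnit W.det := by
    rw [hW, Matrix.det_transpose]
    exact (Matrix.det_vandermonde_ne_zero_iff.mpr hv).isUnit
  have key : G * W = W * D := by
    ext i c
    have hmul : (W * D) i c = v c ^ (i : ℕ) * g.eval (v c) := by
      simp [hW, hD, Matrix.mul_apply, Matrix.diagonal, Matrix.vandermonde, mul_comm]
    rw [hmul]
    have heval : g.eval (v c) = ∑ k : Fin n, g.coeff (k : ℕ) * v c ^ (k : ℕ) := by
      rw [eval_eq_sum_range' hdeg]
      exact (Fin.sum_univ_eq_sum_range (fun k => g.coeff k * v c ^ k) n).symm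
    rw [heval, Finset.mul_sum]
    have hGentry : ∀ j : Fin n, G i j = g.coeff ((j - i : Fin n) : ℕ) := by
      intro j
      have hi : (i : ℕ) < n := i.isLt
      have : ((j : ℕ) + n - (i : ℕ)) % n = ((n - (i : ℕ)) + (j : ℕ)) % n := by
        congr 1; omega
      simp [hG, this, Fin.sub_def]
    have : (G * W) i c = ∑ j : Fin n, g.coeff ((j - i : Fin n) : ℕ) * v c ^ (j : ℕ) := by
      simp only [Matrix.mul_apply, hGentry]
      simp [hW, Matrix.vandermonde]
    rw [this]
    rw [← Equiv.sum_comp (Equiv.addRight i) (fun j => g.coeff ((j - i : Fin n) : ℕ) * v c ^ (j : ℕ))]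
    refine Finset.sum_congr rfl fun k _ => ?_
    have h1 : ((Equiv.addRight i k) - i : Fin n) = k := by
      simp [Equiv.addRight]
    have h2 : v c ^ ((Equiv.addRight i k : Fin n) : ℕ) = v c ^ ((i : ℕ) + (k : ℕ)) := by
      have : ((Equiv.addRight i k : Fin n) : ℕ) = ((k : ℕ) + (i : ℕ)) % n := by
        simp [Equiv.addRight, Fin.add_def]
      rw [this, ← pow_mod_of_pow_eq_one (hvpow c), add_comm]
    rw [h1, h2, pow_add]; ring
  have hrank : G.rank = D.rank := by
    calc G.rank = (G * W).rank := (Matrix.rank_mul_eq_left_of_isUnit_det W G hWdet).symm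
    _ = (W * D).rank := by rw [key]
    _ = D.rank := Matrix.rank_mul_eq_right_of_isUnit_det W D hWdet
  have hrankD : D.rank = Fintype.card {j : Fin n // g.eval (v j) ≠ 0} :=
    Matrix.rank_diagonal _
  have hcard2 : Nat.card {γ : F // γ ≠ 0 ∧ g.eval γ ≠ 0}
      = Fintype.card {j : Fin n // g.eval (v j) ≠ 0} := by
    rw [Nat.card_eq_fintype_card]
    refine Fintype.card_congr ?_
    exact ((Equiv.subtypeSubtypeEquivSubtypeInter (fun γ : F => γ ≠ 0)
      (fun γ => g.eval γ ≠ 0)).symm.trans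
      ((e.subtypeEquiv (fun j => Iff.rfl)).symm))
  rw [hrank, hrankD, hcard2]
end
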